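/- arXiv:2007.05089 — 4 statements merged into one kernel-verified Lean document; each statement's English description precedes it below -/
import Mathlib

section
/- Let E be a finite-dimensional real inner product space, let λ > 0, and let G : E → ℝ and g : E → ℝ be differentiable functions such that G is λ-strongly convex and there is a constant M with ‖∇g(θ)‖ ≤ M for all θ ∈ E. If θ₁ is a minimizer of G and θ₂ is a minimizer of G + g, then ‖θ₁ − θ₂‖ ≤ M / λ. -/
/-!
Strong convexity makes `∇G` strongly monotone, `λ‖u - v‖² ≤ ⟪∇G u - ∇G v, u - v⟫`, hence
`λ‖u - v‖ ≤ ‖∇G u - ∇G v‖` by Cauchy–Schwarz. At the minimizers `∇G θ₁ = 0` and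
`∇G θ₂ = -∇g θ₂`, so `λ‖θ₁ - θ₂‖ ≤ ‖∇g θ₂‖ ≤ M`.
-/

open Set InnerProductSpace
open scoped RealInnerProductSpace Gradient

theorem ConvexOn.fderiv_apply_sub_le_fderiv_apply_sub {E : Type*} [NormedAddCommGroup E]
    [NormedSpace ℝ E] {f : E → ℝ} (hf : ConvexOn ℝ univ f) (hd : Differentiable ℝ f) (u v : E) :
    fderiv ℝ f v (u - v) ≤ fderiv ℝ f u (u - v) := by
  -- restrict `f` to the line through `v` and `u`, where derivatives of convex functions are monotone
  let ℓ : ℝ →ᵃ[ℝ] E := AffineMap.lineMap v u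
  have hℓ : ∀ t, HasDerivAt (f ∘ ℓ) (fderiv ℝ f (ℓ t) (u - v)) t := fun t =>
    (hd (ℓ t)).hasFDerivAt.comp_hasDerivAt t (AffineMap.hasDerivAt_lineMap (x := t))
  have hconv : ConvexOn ℝ univ (f ∘ ℓ) := by
    simpa using hf.comp_affineMap ℓ
  have := hconv.monotoneOn_deriv (fun t _ => (hℓ t).differentiableAt)
    (mem_univ 0) (mem_univ 1) zero_le_one
  simpa [(hℓ 0).deriv, (hℓ 1).deriv, ℓ] using this

section Gradient

variable {E : Type*} [NormedAddCommGroup E] [InnerProductSpace ℝ E] [CompleteSpace E]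
  {f g : E → ℝ} {x : E}

theorem IsLocalMin.gradient_eq_zero (h : IsLocalMin f x) : ∇ f x = 0 := by
  rw [gradient, h.fderiv_eq_zero, map_zero]

theorem gradient_add (hf : DifferentiableAt ℝ f x) (hg : DifferentiableAt ℝ g x) :
    ∇ (fun y => f y + g y) x = ∇ f x + ∇ g x := by
  rw [gradient, fderiv_fun_add hf hg, map_add, gradient, gradient]

theorem StrongConvexOn.mul_norm_sub_sq_le_inner_gradient_sub {m : ℝ}
    (hf : StrongConvexOn univ m f) (hd : Differentiable ℝ f) (u v : E) :
    m * ‖u - v‖ ^ 2 ≤ ⟪∇ f u - ∇ f v, u - v⟫ := by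
  have hfderiv : ∀ x y, fderiv ℝ (fun z => f z - m / 2 * ‖z‖ ^ 2) x y
      = fderiv ℝ f x y - m * ⟪x, y⟫ := fun x y => by
    have hx : HasFDerivAt (fun z => f z - m / 2 * ‖z‖ ^ 2)
        (fderiv ℝ f x - (m / 2) • (2 • innerSL ℝ x)) x :=
      (hd x).hasFDerivAt.sub ((hasStrictFDerivAt_norm_sq x).hasFDerivAt.const_mul (m / 2))
    rw [hx.fderiv]
    simp only [sub_apply, smul_apply, innerSL_apply_apply, smul_eq_mul, nsmul_eq_mul]
    ring
  have hmono := (strongConvexOn_iff_convex.mp hf).fderiv_apply_sub_le_fderiv_apply_sub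
    (hd.sub ((contDiff_norm_sq ℝ (n := 1)).differentiable one_ne_zero |>.const_mul _)) u v
  rw [hfderiv, hfderiv] at hmono
  rw [inner_sub_left, inner_gradient_left, inner_gradient_left, ← real_inner_self_eq_norm_sq,
    inner_sub_left]
  linarith

theorem StrongConvexOn.mul_norm_sub_le_norm_gradient_sub {m : ℝ}
    (hf : StrongConvexOn univ m f) (hd : Differentiable ℝ f) (u v : E) :
    m * ‖u - v‖ ≤ ‖∇ f u - ∇ f v‖ := by
  rcases (norm_nonneg (u - v)).eq_or_lt with h | h
  · rw [← h, mul_zero]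
    exact norm_nonneg _
  · refine le_of_mul_le_mul_right ?_ h
    calc m * ‖u - v‖ * ‖u - v‖ = m * ‖u - v‖ ^ 2 := by ring
      _ ≤ ⟪∇ f u - ∇ f v, u - v⟫ := hf.mul_norm_sub_sq_le_inner_gradient_sub hd u v
      _ ≤ ‖∇ f u - ∇ f v‖ * ‖u - v‖ := real_inner_le_norm _ _

end Gradient

/-- If `G` is `λ`-strongly convex (i.e. `θ ↦ G θ - (λ/2)‖θ‖²` is convex),
`g` has gradient bounded by `M`, `θ₁` minimizes `G`, and `θ₂` minimizes `G + g`, then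
`‖θ₁ - θ₂‖ ≤ M / λ`. -/
theorem model_sensitivity_bound
    {E : Type*} [NormedAddCommGroup E] [InnerProductSpace ℝ E] [FiniteDimensional ℝ E]
    (lam : ℝ) (hlam : 0 < lam)
    (G g : E → ℝ) (hG : Differentiable ℝ G) (hg : Differentiable ℝ g)
    (hGsc : ConvexOn ℝ Set.univ (fun θ => G θ - lam / 2 * ‖θ‖ ^ 2))
    (M : ℝ) (hM : ∀ θ, ‖gradient g θ‖ ≤ M)
    (θ₁ θ₂ : E)
    (hθ₁ : ∀ θ, G θ₁ ≤ G θ)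
    (hθ₂ : ∀ θ, G θ₂ + g θ₂ ≤ G θ + g θ) :
    ‖θ₁ - θ₂‖ ≤ M / lam := by
  have h₁ : ∇ G θ₁ = 0 := IsLocalMin.gradient_eq_zero (.of_forall hθ₁)
  have h₂ : ∇ G θ₂ + ∇ g θ₂ = 0 := by
    rw [← gradient_add (hG θ₂) (hg θ₂)]
    exact IsLocalMin.gradient_eq_zero (.of_forall hθ₂)
  rw [le_div_iff₀ hlam, mul_comm]
  calc lam * ‖θ₁ - θ₂‖ ≤ ‖∇ G θ₁ - ∇ G θ₂‖ :=
        (strongConvexOn_iff_convex.mpr hGsc).mul_norm_sub_le_norm_gradient_sub hG θ₁ θ₂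
    _ = ‖∇ g θ₂‖ := by rw [h₁, eq_neg_of_add_eq_zero_left h₂, zero_sub, neg_neg]
    _ ≤ M := hM θ₂
end

section
/- Let N ≥ 1 and K ≥ 0, let h₁, h₂ : ℝ^C → ℝ be differentiable functions whose gradients satisfy ‖∇h₁(a)‖₂ ≤ K and ‖∇h₂(a)‖₂ ≤ K for all a, and let x, x′ ∈ ℝ^D with ‖x‖₂ ≤ 1 and ‖x′‖₂ ≤ 1. Define g : ℝ^{D×C} → ℝ by g(θ) = (1/N)·(h₁(θᵀx) − h₂(θᵀx′)). Then g is differentiable and its gradient (a D×C matrix) satisfies ‖∇g(θ)‖_F ≤ 2K/N for every θ, where ‖·‖_F denotes the Frobenius norm. -/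
/-!
By the chain rule, `∇g(θ)` is `1/N` times the difference of `∇h₁(θᵀx)` and `∇h₂(θᵀx')`, each
pulled back along a linear map `θ ↦ θᵀy`. Cauchy–Schwarz, row by row, gives
`‖θᵀy‖₂ ≤ ‖y‖₂ ‖θ‖_F`, so for `‖y‖₂ ≤ 1` this map has operator norm at most `1` and the pullback
does not increase the norm of a gradient; each of the two terms thus has norm at most `K`.
-/

open InnerProductSpace

/-- The matrix–vector product `θᵀ x ∈ ℝ^C`, where `θ ∈ ℝ^{D×C}` is viewed as an element of
the Euclidean space indexed by `Fin D × Fin C` (so its Euclidean norm is the Frobenius norm). -/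
noncomputable def matVecT {D C : ℕ} (θ : EuclideanSpace ℝ (Fin D × Fin C))
    (x : EuclideanSpace ℝ (Fin D)) : EuclideanSpace ℝ (Fin C) :=
  WithLp.toLp 2 (fun c => ∑ d, θ (d, c) * x d)

section MatVecT

variable {D C : ℕ}

lemma sq_norm_eq_sum_sum_sq (θ : EuclideanSpace ℝ (Fin D × Fin C)) :
    ‖θ‖ ^ 2 = ∑ c, ∑ d, θ (d, c) ^ 2 := by
  rw [EuclideanSpace.norm_sq_eq, Fintype.sum_prod_type, Finset.sum_comm]
  simp only [Real.norm_eq_abs, sq_abs]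

lemma norm_matVecT_le (θ : EuclideanSpace ℝ (Fin D × Fin C)) (x : EuclideanSpace ℝ (Fin D)) :
    ‖matVecT θ x‖ ≤ ‖x‖ * ‖θ‖ := by
  refine (pow_le_pow_iff_left₀ (norm_nonneg _) (by positivity) two_ne_zero).1 ?_
  calc ‖matVecT θ x‖ ^ 2 = ∑ c, (∑ d, θ (d, c) * x d) ^ 2 := by
        simp only [EuclideanSpace.norm_sq_eq, Real.norm_eq_abs, sq_abs, matVecT]
    _ ≤ ∑ c, (∑ d, θ (d, c) ^ 2) * ∑ d, x d ^ 2 :=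
        Finset.sum_le_sum fun c _ => Finset.sum_mul_sq_le_sq_mul_sq _ _ _
    _ = (‖x‖ * ‖θ‖) ^ 2 := by
        rw [← Finset.sum_mul, mul_pow, sq_norm_eq_sum_sum_sq, mul_comm, EuclideanSpace.norm_sq_eq]
        simp only [Real.norm_eq_abs, sq_abs]

noncomputable def matVecTL (x : EuclideanSpace ℝ (Fin D)) :
    EuclideanSpace ℝ (Fin D × Fin C) →L[ℝ] EuclideanSpace ℝ (Fin C) :=
  LinearMap.mkContinuous
    { toFun := fun θ => matVecT θ x
      map_add' := fun θ η => by
        ext c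
        simp [matVecT, add_mul, Finset.sum_add_distrib]
      map_smul' := fun r θ => by
        ext c
        simp [matVecT, Finset.mul_sum, mul_assoc] }
    ‖x‖ (fun θ => norm_matVecT_le θ x)

lemma norm_matVecTL_le (x : EuclideanSpace ℝ (Fin D)) :
    ‖matVecTL (C := C) x‖ ≤ ‖x‖ :=
  LinearMap.mkContinuous_norm_le _ (norm_nonneg x) _

end MatVecT

section Gradient

variable {E F : Type*} [NormedAddCommGroup E] [InnerProductSpace ℝ E] [CompleteSpace E]
  [NormedAddCommGroup F] [NormedSpace ℝ F]

lemma norm_gradient_eq_norm_fderiv (f : E → ℝ) (a : E) : ‖gradient f a‖ = ‖fderiv ℝ f a‖ :=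
  (toDual ℝ E).symm.norm_map _

lemma norm_fderiv_comp_le_of_norm_gradient_le {h : E → ℝ} {K : ℝ}
    (hK : ∀ a, ‖gradient h a‖ ≤ K) {L : F →L[ℝ] E} (hL : ‖L‖ ≤ 1) (θ : F) :
    ‖(fderiv ℝ h (L θ)).comp L‖ ≤ K :=
  calc ‖(fderiv ℝ h (L θ)).comp L‖ ≤ ‖fderiv ℝ h (L θ)‖ * ‖L‖ :=
        (fderiv ℝ h (L θ)).opNorm_comp_le L
    _ ≤ ‖fderiv ℝ h (L θ)‖ := mul_le_of_le_one_right (norm_nonneg _) hL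
    _ ≤ K := by rw [← norm_gradient_eq_norm_fderiv]; exact hK _

end Gradient

theorem grad_bound_difference_loss_general {D C : ℕ} (N : ℕ) (K : ℝ)
    (h₁ h₂ : EuclideanSpace ℝ (Fin C) → ℝ)
    (hd1 : Differentiable ℝ h₁) (hd2 : Differentiable ℝ h₂)
    (hg1 : ∀ a, ‖gradient h₁ a‖ ≤ K) (hg2 : ∀ a, ‖gradient h₂ a‖ ≤ K)
    (x x' : EuclideanSpace ℝ (Fin D)) (hx : ‖x‖ ≤ 1) (hx' : ‖x'‖ ≤ 1)
    (g : EuclideanSpace ℝ (Fin D × Fin C) → ℝ)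
    (hgdef : ∀ θ, g θ = (1 / (N : ℝ)) * (h₁ (matVecT θ x) - h₂ (matVecT θ x'))) :
    Differentiable ℝ g ∧ ∀ θ, ‖gradient g θ‖ ≤ 2 * K / N := by
  set L := matVecTL (C := C) x
  set L' := matVecTL (C := C) x'
  have hg : g = fun θ => (1 / (N : ℝ)) * (h₁ (L θ) - h₂ (L' θ)) := funext hgdef
  have hfd : ∀ θ, HasFDerivAt g ((1 / (N : ℝ)) •
      ((fderiv ℝ h₁ (L θ)).comp L - (fderiv ℝ h₂ (L' θ)).comp L')) θ := fun θ =>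
    hg ▸ (((hd1 _).hasFDerivAt.comp θ L.hasFDerivAt).sub
      ((hd2 _).hasFDerivAt.comp θ L'.hasFDerivAt)).const_mul _
  refine ⟨fun θ => (hfd θ).differentiableAt, fun θ => ?_⟩
  calc ‖gradient g θ‖
      = ‖(1 / (N : ℝ)) • ((fderiv ℝ h₁ (L θ)).comp L - (fderiv ℝ h₂ (L' θ)).comp L')‖ := by
        rw [norm_gradient_eq_norm_fderiv, (hfd θ).fderiv]
    _ ≤ (1 / (N : ℝ)) * (K + K) := by
        rw [norm_smul, Real.norm_of_nonneg (by positivity)]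
        gcongr
        refine (norm_sub_le _ _).trans (add_le_add ?_ ?_)
        · exact norm_fderiv_comp_le_of_norm_gradient_le hg1 ((norm_matVecTL_le x).trans hx) θ
        · exact norm_fderiv_comp_le_of_norm_gradient_le hg2 ((norm_matVecTL_le x').trans hx') θ
    _ = 2 * K / N := by ring

/-- if `g(θ) = (1/N)(h₁(θᵀx) - h₂(θᵀx'))` with `‖∇h₁‖, ‖∇h₂‖ ≤ K` and
`‖x‖₂, ‖x'‖₂ ≤ 1`, then `g` is differentiable with `‖∇g(θ)‖_F ≤ 2K/N` for all `θ`. -/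
theorem grad_bound_difference_loss {D C : ℕ} (N : ℕ) (hN : 1 ≤ N) (K : ℝ) (hK : 0 ≤ K)
    (h₁ h₂ : EuclideanSpace ℝ (Fin C) → ℝ)
    (hd1 : Differentiable ℝ h₁) (hd2 : Differentiable ℝ h₂)
    (hg1 : ∀ a, ‖gradient h₁ a‖ ≤ K) (hg2 : ∀ a, ‖gradient h₂ a‖ ≤ K)
    (x x' : EuclideanSpace ℝ (Fin D)) (hx : ‖x‖ ≤ 1) (hx' : ‖x'‖ ≤ 1)
    (g : EuclideanSpace ℝ (Fin D × Fin C) → ℝ)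
    (hgdef : ∀ θ, g θ = (1 / (N : ℝ)) * (h₁ (matVecT θ x) - h₂ (matVecT θ x'))) :
    Differentiable ℝ g ∧ ∀ θ, ‖gradient g θ‖ ≤ 2 * K / N :=
  grad_bound_difference_loss_general N K h₁ h₂ hd1 hd2 hg1 hg2 x x' hx hx' g hgdef
end

section
/- Let A and E be real symmetric n×n matrices with A positive definite and E positive semidefinite, and suppose rank(E) ≤ C. Let m ≥ 0 be any constant such that m·A − E is positive semidefinite (equivalently, m ≥ λ_max(A⁻¹E)). Then det(A + E) ≤ det(A) · (1 + m)^C. -/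
/-!
Factor `A = Sᴴ S` with `S` invertible and write `E = Sᴴ F S`. Then
`det (A + E) = det A · det (1 + F)`, where `F` is positive semidefinite, `F ≤ m • 1` and
`rank F = rank E ≤ C`. So `det (1 + F) = ∏ (1 + λᵢ)` over the eigenvalues `0 ≤ λᵢ ≤ m` of `F`,
and at most `C` of the factors differ from `1`.
-/

open Matrix Finset
open scoped MatrixOrder ComplexOrder

lemma IsUnit.exists_eq_star_mul_mul {R : Type*} [Monoid R] [StarMul R] {u : R} (hu : IsUnit u)
    (x : R) : ∃ y, x = star u * y * u := by
  obtain ⟨u, rfl⟩ := hu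
  refine ⟨star ↑u⁻¹ * x * ↑u⁻¹, ?_⟩
  simp only [← mul_assoc, ← star_mul, Units.inv_mul, star_one, one_mul]
  simp [mul_assoc]

namespace Matrix.IsHermitian

variable {n 𝕜 : Type*} [RCLike 𝕜] [Fintype n] [DecidableEq n] {F : Matrix n n 𝕜}

lemma eigenvalues_le_of_posSemidef_smul_one_sub (hF : F.IsHermitian) {m : ℝ}
    (hmF : (m • 1 - F).PosSemidef) (i : n) : hF.eigenvalues i ≤ m := by
  have : F ≤ algebraMap ℝ (Matrix n n 𝕜) m := by
    rwa [Matrix.le_iff, Algebra.algebraMap_eq_smul_one]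
  exact (le_algebraMap_iff_spectrum_le hF.isSelfAdjoint).1 this _
    (hF.eigenvalues_mem_spectrum_real i)

lemma det_cfc (hF : F.IsHermitian) (f : ℝ → ℝ) :
    (cfc f F).det = ∏ i, (f (hF.eigenvalues i) : 𝕜) := by
  rw [hF.cfc_eq, IsHermitian.cfc, Unitary.conjStarAlgAut_apply, det_mul_right_comm,
    Unitary.mul_star_self_of_mem hF.eigenvectorUnitary.2, one_mul, det_diagonal]
  rfl

lemma det_one_add (hF : F.IsHermitian) :
    (1 + F).det = ∏ i, (1 + hF.eigenvalues i : 𝕜) := by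
  have : 1 + F = cfc (fun x : ℝ => 1 + x) F := by
    rw [cfc_const_add (1 : ℝ) (fun x => x) F, cfc_id' ℝ F, Algebra.algebraMap_eq_smul_one,
      one_smul]
  rw [this, hF.det_cfc]
  push_cast
  rfl

end Matrix.IsHermitian

lemma prod_one_add_le_one_add_pow {ι : Type*} [Fintype ι] {μ : ι → ℝ} {m : ℝ} {C : ℕ}
    (hμ : ∀ i, 0 ≤ μ i) (hμm : ∀ i, μ i ≤ m) (hm : 0 ≤ m) (hC : #{i | μ i ≠ 0} ≤ C) :
    ∏ i, (1 + μ i) ≤ (1 + m) ^ C :=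
  calc ∏ i, (1 + μ i) = ∏ i with μ i ≠ 0, (1 + μ i) :=
        (prod_filter_of_ne fun i _ h => by contrapose! h; simp [h]).symm
    _ ≤ ∏ i with μ i ≠ 0, (1 + m) :=
        prod_le_prod (fun i _ => by linarith [hμ i]) (fun i _ => by linarith [hμm i])
    _ = (1 + m) ^ #{i | μ i ≠ 0} := prod_const _
    _ ≤ (1 + m) ^ C := pow_le_pow_right₀ (by linarith) hC

namespace Matrix

variable {n : Type*} [Fintype n] [DecidableEq n]

lemma PosSemidef.det_one_add_le_pow {F : Matrix n n ℝ} {m : ℝ} {C : ℕ} (hF : F.PosSemidef)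
    (hm : 0 ≤ m) (hmF : (m • 1 - F).PosSemidef) (hrank : F.rank ≤ C) :
    (1 + F).det ≤ (1 + m) ^ C := by
  rw [hF.1.det_one_add]
  simp only [RCLike.ofReal_real_eq_id, id_eq]
  refine prod_one_add_le_one_add_pow hF.eigenvalues_nonneg
    (hF.1.eigenvalues_le_of_posSemidef_smul_one_sub hmF) hm ?_
  rwa [← Fintype.card_subtype, ← hF.1.rank_eq_card_non_zero_eigs]

lemma PosDef.exists_isUnit_eq_star_mul_self {𝕜 : Type*} [RCLike 𝕜] {A : Matrix n n 𝕜}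
    (hA : A.PosDef) : ∃ S, IsUnit S ∧ A = star S * S := by
  have hA0 : 0 ≤ A := nonneg_iff_posSemidef.2 hA.posSemidef
  refine ⟨CFC.sqrt A, (CFC.isUnit_sqrt_iff A hA0).2 hA.isUnit, ?_⟩
  rw [(CFC.sqrt_nonneg A).isSelfAdjoint.star_eq, CFC.sqrt_mul_sqrt_self A hA0]

end Matrix

/-- Lemma 2 of the paper: for symmetric matrices with `A` positive definite,
`E` positive semidefinite of rank at most `C`, and `m·A - E` positive semidefinite
(i.e. `m ≥ λ_max(A⁻¹E)`), we have `det(A + E) ≤ det(A)·(1 + m)^C`. -/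
theorem det_add_le_det_mul_pow {n : ℕ} (C : ℕ) (A E : Matrix (Fin n) (Fin n) ℝ)
    (hA : A.PosDef) (hE : E.PosSemidef) (hrank : E.rank ≤ C)
    (m : ℝ) (hm : 0 ≤ m) (hmA : (m • A - E).PosSemidef) :
    (A + E).det ≤ A.det * (1 + m) ^ C := by
  obtain ⟨S, hS, rfl⟩ := hA.exists_isUnit_eq_star_mul_self
  have hSdet : IsUnit S.det := (isUnit_iff_isUnit_det S).1 hS
  obtain ⟨F, rfl⟩ := hS.exists_eq_star_mul_mul E
  have hF : F.PosSemidef := hS.posSemidef_star_left_conjugate_iff.1 hE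
  have hmF : (m • 1 - F).PosSemidef := by
    refine hS.posSemidef_star_left_conjugate_iff.1 ?_
    simpa [Matrix.mul_sub, Matrix.sub_mul] using hmA
  have hrankF : F.rank ≤ C := by
    rwa [rank_mul_eq_left_of_isUnit_det _ _ hSdet, rank_mul_eq_right_of_isUnit_det _ _
      ((isUnit_iff_isUnit_det _).1 hS.star)] at hrank
  calc (star S * S + star S * F * S).det = (star S * (1 + F) * S).det := by
        rw [Matrix.mul_add, Matrix.add_mul, Matrix.mul_one]
    _ = (star S * S).det * (1 + F).det := by simp only [det_mul]; ring
    _ ≤ (star S * S).det * (1 + m) ^ C :=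
        mul_le_mul_of_nonneg_left (hF.det_one_add_le_pow hm hmF hrankF) hA.det_pos.le
end

section
/- Let ρ > 0 and L ≥ 0, and let A and E be real symmetric n×n matrices such that A − ρ·I is positive semidefinite, E is positive semidefinite with all eigenvalues at most L, and rank(E) ≤ C. Then A is invertible and det(A + E) ≤ det(A) · (1 + L/ρ)^C. -/
/-!
Write `A = Sᴴ S` with `S` invertible. Then `A + E = Sᴴ (1 + M) S` with `M = S⁻ᴴ E S⁻¹`, so
`det (A + E) = det A · det (1 + M)`. The congruence preserves rank and turns `E ≤ (L/ρ) • A`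
(a consequence of `E ≤ L • 1 ≤ (L/ρ) • A`) into `0 ≤ M ≤ (L/ρ) • 1`. Over the eigenvalues `μᵢ ∈ [0, L/ρ]`
of `M`, `det (1 + M) = ∏ (1 + μᵢ)`, and only the `rank M ≤ C` factors with `μᵢ ≠ 0` differ from `1`.
-/

open Finset Unitary
open scoped MatrixOrder

namespace Matrix

variable {n : Type*} [Fintype n] [DecidableEq n]

lemma IsHermitian.eigenvalues_le_of_le_smul_one {𝕜 : Type*} [RCLike 𝕜] {A : Matrix n n 𝕜}
    (hA : A.IsHermitian) {c : ℝ} (h : A ≤ c • 1) (i : n) : hA.eigenvalues i ≤ c := by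
  rw [← Algebra.algebraMap_eq_smul_one, le_algebraMap_iff_spectrum_le hA.isSelfAdjoint] at h
  exact h _ (hA.spectrum_real_eq_range_eigenvalues ▸ ⟨i, rfl⟩)

lemma IsHermitian.det_one_add_s8 {𝕜 : Type*} [RCLike 𝕜] {A : Matrix n n 𝕜} (hA : A.IsHermitian) :
    (1 + A).det = ∏ i, (1 + (hA.eigenvalues i : 𝕜)) := by
  have h1A : 1 + A = conjStarAlgAut 𝕜 _ hA.eigenvectorUnitary
      (1 + diagonal (RCLike.ofReal ∘ hA.eigenvalues)) := by
    rw [map_add, map_one, ← hA.spectral_theorem]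
  rw [h1A, conjStarAlgAut_apply, det_mul_right_comm, mul_star_self_of_mem hA.eigenvectorUnitary.2,
    one_mul, ← diagonal_one, diagonal_add, det_diagonal]
  rfl

lemma PosSemidef.det_one_add_le_pow_of_rank_le {M : Matrix n n ℝ} (hM : M.PosSemidef) {c : ℝ}
    (hc : 0 ≤ c) (hMc : M ≤ c • 1) {C : ℕ} (hrank : M.rank ≤ C) :
    (1 + M).det ≤ (1 + c) ^ C := by
  set μ := hM.isHermitian.eigenvalues
  set support := univ.filter (μ · ≠ 0)
  have hcard : #support ≤ C := by
    rwa [hM.isHermitian.rank_eq_card_non_zero_eigs, Fintype.card_subtype] at hrank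
  calc (1 + M).det = ∏ i ∈ support, (1 + μ i) := by
        rw [hM.isHermitian.det_one_add_s8, ← prod_filter_of_ne (p := (μ · ≠ 0))
          fun i _ hne hμ ↦ hne (by change 1 + μ i = 1; rw [hμ, add_zero])]
        rfl
    _ ≤ ∏ _i ∈ support, (1 + c) := prod_le_prod (fun i _ ↦ by linarith [hM.eigenvalues_nonneg i])
        fun i _ ↦ by linarith [hM.isHermitian.eigenvalues_le_of_le_smul_one hMc i]
    _ = (1 + c) ^ #support := prod_const _
    _ ≤ (1 + c) ^ C := pow_le_pow_right₀ (by linarith) hcard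

lemma det_conjTranspose_mul_self_add {R : Type*} [CommRing R] [StarRing R] {S : Matrix n n R}
    (hS : IsUnit S) (E : Matrix n n R) :
    (Sᴴ * S + E).det = (Sᴴ * S).det * (1 + (S⁻¹)ᴴ * E * S⁻¹).det := by
  have hSdet := (isUnit_iff_isUnit_det S).mp hS
  have h : Sᴴ * S + E = Sᴴ * (1 + (S⁻¹)ᴴ * E * S⁻¹) * S := by
    rw [Matrix.mul_add, Matrix.add_mul, Matrix.mul_one, ← Matrix.mul_assoc, ← Matrix.mul_assoc,
      ← conjTranspose_mul, nonsing_inv_mul _ hSdet, conjTranspose_one, Matrix.one_mul,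
      Matrix.mul_assoc, nonsing_inv_mul _ hSdet, Matrix.mul_one]
  rw [h, det_mul, det_mul, det_mul]
  ring

lemma PosDef.det_add_le_det_mul_pow_of_rank_le {A E : Matrix n n ℝ} (hA : A.PosDef)
    (hE : E.PosSemidef) {c : ℝ} (hc : 0 ≤ c) (hEA : E ≤ c • A) {C : ℕ} (hrank : E.rank ≤ C) :
    (A + E).det ≤ A.det * (1 + c) ^ C := by
  obtain ⟨S, hS, rfl⟩ := CStarAlgebra.isStrictlyPositive_iff_eq_star_mul_self.mp
    hA.isStrictlyPositive
  have hSdet := (isUnit_iff_isUnit_det S).mp hS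
  set M := (S⁻¹)ᴴ * E * S⁻¹
  have hM : M.PosSemidef := hE.conjTranspose_mul_mul_same _
  have hMc : M ≤ c • 1 := by
    have : c • 1 - M = (S⁻¹)ᴴ * (c • (star S * S) - E) * S⁻¹ := by
      rw [Matrix.mul_sub, Matrix.sub_mul, Matrix.mul_smul, Matrix.smul_mul, star_eq_conjTranspose,
        ← Matrix.mul_assoc, ← conjTranspose_mul, mul_nonsing_inv _ hSdet, conjTranspose_one,
        Matrix.one_mul, mul_nonsing_inv _ hSdet]
    rw [le_iff, this]
    exact hEA.conjTranspose_mul_mul_same _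
  have hMrank : M.rank ≤ C := by
    have hSinv := isUnit_nonsing_inv_det _ hSdet
    rwa [rank_mul_eq_left_of_isUnit_det _ _ hSinv, rank_mul_eq_right_of_isUnit_det _ _
      (by rwa [det_conjTranspose, isUnit_star])]
  rw [star_eq_conjTranspose, det_conjTranspose_mul_self_add hS]
  exact mul_le_mul_of_nonneg_left (hM.det_one_add_le_pow_of_rank_le hc hMc hMrank)
    hA.det_pos.le

end Matrix

theorem det_add_le_det_mul_pow_of_eig_bounds_general {n : ℕ} (C : ℕ) (ρ L : ℝ)
    (hρ : 0 < ρ) (hL : 0 ≤ L)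
    (A E : Matrix (Fin n) (Fin n) ℝ)
    (hA : (A - ρ • (1 : Matrix (Fin n) (Fin n) ℝ)).PosSemidef)
    (hE : E.PosSemidef)
    (hEL : (L • (1 : Matrix (Fin n) (Fin n) ℝ) - E).PosSemidef)
    (hrank : E.rank ≤ C) :
    IsUnit A ∧ (A + E).det ≤ A.det * (1 + L / ρ) ^ C := by
  have hA_posDef : A.PosDef := by
    simpa using Matrix.PosDef.posSemidef_add hA (Matrix.PosDef.one.smul hρ)
  have hc : 0 ≤ L / ρ := div_nonneg hL hρ.le
  have hEA : E ≤ (L / ρ) • A := by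
    have h : (L / ρ) • A - E = (L / ρ) • (A - ρ • 1) + (L • 1 - E) := by
      rw [smul_sub, smul_smul, div_mul_cancel₀ _ hρ.ne']
      abel
    rw [Matrix.le_iff, h]
    exact (hA.smul hc).add hEL
  exact ⟨hA_posDef.isUnit, hA_posDef.det_add_le_det_mul_pow_of_rank_le hE hc hEA hrank⟩

/-- if `A - ρ·I` is positive semidefinite (so the eigenvalues of `A` are at
least `ρ > 0`), and `E` is positive semidefinite with eigenvalues at most `L` and rank at
most `C`, then `A` is invertible and `det(A + E) ≤ det(A)·(1 + L/ρ)^C`. -/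
theorem det_add_le_det_mul_pow_of_eig_bounds {n : ℕ} (C : ℕ) (ρ L : ℝ)
    (hρ : 0 < ρ) (hL : 0 ≤ L)
    (A E : Matrix (Fin n) (Fin n) ℝ)
    (hAsymm : A.IsSymm) (hEsymm : E.IsSymm)
    (hA : (A - ρ • (1 : Matrix (Fin n) (Fin n) ℝ)).PosSemidef)
    (hE : E.PosSemidef)
    (hEL : (L • (1 : Matrix (Fin n) (Fin n) ℝ) - E).PosSemidef)
    (hrank : E.rank ≤ C) :
    IsUnit A ∧ (A + E).det ≤ A.det * (1 + L / ρ) ^ C :=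
  det_add_le_det_mul_pow_of_eig_bounds_general C ρ L hρ hL A E hA hE hEL hrank
end
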